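/- For n ≥ 4 and 3 ≤ t ≤ n−1, if G is an n-vertex graph with minimum degree at least 1 and G is not the star K_{1,n-1}, then the number of independent sets of size t in G is strictly less than the number of independent sets of size t in K_{1,n-1}, which equals C(n-1, t). -/

import Mathlib

/-!
Fix a vertex `v` of maximum degree. The independent `t`-sets avoiding `v` are among the
`t`-subsets of `V ∖ {v}`, so it suffices to show that there are fewer independent `t`-sets
through `v` than dependent `t`-subsets of `V ∖ {v}`. Exchanging `v` in an independent
`S ∋ v` for a neighbour `w` of some `x ∈ S ∖ {v}` gives at least `t - 1` pairs `(x, w)` per `S`,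
each landing in a dependent set `U`. Conversely a set `U` receives at most `t - 1` pairs, and,
as `G` is not a star, some `U` receives at most `t - 2`.
-/

/-- A finset of vertices is independent: no edge inside. -/
def SimpleGraph.IsIndepFinset {V : Type*} (G : SimpleGraph V) (s : Finset V) : Prop :=
  ∀ v ∈ s, ∀ w ∈ s, ¬ G.Adj v w

/-- `indepCount G t` = number of independent sets of size `t` in `G`. -/
noncomputable def indepCount {V : Type*} [Fintype V] (G : SimpleGraph V) (t : ℕ) : ℕ :=
  Nat.card {s : Finset V // s.card = t ∧ G.IsIndepFinset s}

/-- `indepTotal G` = total number of independent sets in `G` (including ∅). -/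
noncomputable def indepTotal {V : Type*} [Fintype V] (G : SimpleGraph V) : ℕ :=
  Nat.card {s : Finset V // G.IsIndepFinset s}

open Classical in
/-- The independence polynomial `P(G,x) = Σ_t i_t(G) xᵗ`. -/
noncomputable def indPoly {V : Type*} [Fintype V] (G : SimpleGraph V) (x : ℝ) : ℝ :=
  ∑ s ∈ Finset.univ.filter (fun s : Finset V => G.IsIndepFinset s), x ^ s.card

open Finset

namespace SimpleGraph

variable {V : Type*} (G : SimpleGraph V)

instance [DecidableRel G.Adj] : DecidablePred G.IsIndepFinset :=
  fun _ => by unfold IsIndepFinset; infer_instance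

variable {G} in
lemma IsIndepFinset.mono {s t : Finset V} (ht : G.IsIndepFinset t) (hst : s ⊆ t) :
    G.IsIndepFinset s :=
  fun a ha b hb => ht a (hst ha) b (hst hb)

variable {G} in
lemma IsIndepFinset.notMem_of_adj {S : Finset V} {x w : V} (hS : G.IsIndepFinset S)
    (hxS : x ∈ S) (hxw : G.Adj x w) : w ∉ S :=
  fun hwS => hS x hxS w hwS hxw

lemma eq_or_eq_of_adj_of_isIndepFinset_erase [DecidableEq V] {U : Finset V} {w x y : V}
    (hU : G.IsIndepFinset (U.erase w)) (hx : x ∈ U) (hy : y ∈ U) (hxy : G.Adj x y) :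
    x = w ∨ y = w := by
  by_contra! h
  exact hU x (mem_erase.2 ⟨h.1, hx⟩) y (mem_erase.2 ⟨h.2, hy⟩) hxy

lemma eq_starGraph_of_forall_adj {v : V} (hG : ∀ x, ∃ w, G.Adj x w)
    (h : ∀ a b, G.Adj a b → a = v ∨ b = v) : G = starGraph v := by
  ext a b
  rw [starGraph_adj]
  refine ⟨fun hab => ⟨hab.ne, h a b hab⟩, ?_⟩
  rintro ⟨hab, rfl | rfl⟩
  · obtain ⟨w, hbw⟩ := hG b
    obtain rfl : w = a := (h b w hbw).resolve_left hab.symm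
    exact hbw.symm
  · obtain ⟨w, haw⟩ := hG a
    obtain rfl : w = b := (h a w haw).resolve_left hab
    exact haw

lemma nonempty_starGraph_iso_completeBipartiteGraph [Fintype V] (v : V) :
    Nonempty (starGraph v ≃g completeBipartiteGraph (Fin 1) (Fin (Fintype.card V - 1))) := by
  have hcard : Fintype.card V = Fintype.card (Fin 1 ⊕ Fin (Fintype.card V - 1)) := by
    have := Fintype.card_pos_iff.2 ⟨v⟩
    simp only [Fintype.card_sum, Fintype.card_fin]
    omega
  let e₀ := Fintype.equivOfCardEq hcard
  let e := e₀.trans (Equiv.swap (e₀ v) (Sum.inl 0))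
  have he : ∀ a, (e a).isLeft ↔ a = v := by
    intro a
    have hv : e v = Sum.inl 0 := by simp [e]
    rw [← e.apply_eq_iff_eq, hv]
    rcases e a with i | i
    · simp [Fin.fin_one_eq_zero i]
    · simp
  refine ⟨⟨e, fun {a b} => ?_⟩⟩
  simp only [completeBipartiteGraph_adj, starGraph_adj, ← Sum.not_isLeft, he]
  grind

lemma not_isUniversal_iff_degree_lt [Fintype V] [DecidableEq V] [DecidableRel G.Adj] {v : V} :
    ¬ G.IsUniversal v ↔ G.degree v < Fintype.card V - 1 := by
  simp only [IsUniversal, not_forall, exists_prop, ← compl_adj, ← degree_pos_iff_exists_adj,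
    degree_compl]
  omega

section Exchange

variable [DecidableEq V] [DecidableRel G.Adj] (v : V)

-- `(x, w) ∈ G.exchangePairs v U` iff `U` arises from the independent set `insert v (U.erase w)`
-- by exchanging `v` for `w`, a neighbour of its element `x`.
def exchangePairs (U : Finset V) : Finset (V × V) :=
  {p ∈ U ×ˢ U | G.Adj p.1 p.2 ∧ G.IsIndepFinset (insert v (U.erase p.2))}

variable {G v} in
lemma isIndepFinset_erase_of_mem_exchangePairs {U : Finset V} {p : V × V}
    (hp : p ∈ G.exchangePairs v U) : G.IsIndepFinset (U.erase p.2) :=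
  (mem_filter.1 hp).2.2.mono (subset_insert _ _)

-- If `U.erase w` and `U.erase w'` are independent for some `w ≠ w'`, the only edge in `U` is `ww'`.
lemma card_exchangePairs_le (U : Finset V) : #(G.exchangePairs v U) ≤ max 2 (#U - 1) := by
  by_cases h : ∃ p ∈ G.exchangePairs v U, ∃ q ∈ G.exchangePairs v U, p.2 ≠ q.2
  · obtain ⟨p, hp, q, hq, hpq⟩ := h
    have hsub : G.exchangePairs v U ⊆ {(p.2, q.2), (q.2, p.2)} := by
      intro r hr
      obtain ⟨hrU, hadj, -⟩ := mem_filter.1 hr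
      rw [mem_product] at hrU
      have hp' := G.eq_or_eq_of_adj_of_isIndepFinset_erase
        (isIndepFinset_erase_of_mem_exchangePairs hp) hrU.1 hrU.2 hadj
      have hq' := G.eq_or_eq_of_adj_of_isIndepFinset_erase
        (isIndepFinset_erase_of_mem_exchangePairs hq) hrU.1 hrU.2 hadj
      have := hadj.ne
      simp only [mem_insert, mem_singleton, Prod.ext_iff]
      grind
    exact (card_le_card hsub).trans (card_le_two.trans (le_max_left _ _))
  · push Not at h
    obtain he | ⟨p, hp⟩ := (G.exchangePairs v U).eq_empty_or_nonempty
    · simp [he]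
    have hsub : G.exchangePairs v U ⊆ (U.erase p.2) ×ˢ {p.2} := by
      intro r hr
      obtain ⟨hrU, hadj, -⟩ := mem_filter.1 hr
      rw [mem_product] at hrU
      have hrp := h r hr p hp
      simp only [mem_product, mem_erase, mem_singleton, ← hrp]
      exact ⟨⟨hadj.ne, hrU.1⟩, trivial⟩
    calc #(G.exchangePairs v U) ≤ #((U.erase p.2) ×ˢ {p.2}) := card_le_card hsub
      _ = #U - 1 := by
        rw [card_product, card_singleton, mul_one,
          card_erase_of_mem (mem_product.1 (mem_filter.1 hp).1).2]
      _ ≤ max 2 (#U - 1) := le_max_right _ _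

variable {G v} in
lemma exchangePairs_eq_empty {U : Finset V} {a b : V} (ha : a ∈ U) (hb : b ∈ U) (hab : a ≠ b)
    (hva : G.Adj v a) (hvb : G.Adj v b) : G.exchangePairs v U = ∅ := by
  refine eq_empty_of_forall_notMem fun p hp => ?_
  obtain ⟨-, -, hind⟩ := mem_filter.1 hp
  obtain ⟨c, hcU, hvc⟩ : ∃ c ∈ U.erase p.2, G.Adj v c := by
    by_cases hap : a = p.2
    · exact ⟨b, mem_erase.2 ⟨hap ▸ hab.symm, hb⟩, hvb⟩
    · exact ⟨a, mem_erase.2 ⟨hap, ha⟩, hva⟩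
  exact hind v (mem_insert_self _ _) c (mem_insert_of_mem hcU) hvc

variable {G v} in
lemma card_exchangePairs_le_of_adj {U : Finset V} {u z : V} (hvu : G.Adj v u) (hu : u ∈ U)
    (hz : z ∈ U) (hzu : z ≠ u) (huz : ¬ G.Adj u z) : #(G.exchangePairs v U) ≤ #U - 2 := by
  have hsub : G.exchangePairs v U ⊆ ((U.erase u).erase z) ×ˢ {u} := by
    intro p hp
    obtain ⟨hpU, hadj, hind⟩ := mem_filter.1 hp
    rw [mem_product] at hpU
    have hw : p.2 = u := by
      by_contra hw
      exact hind v (mem_insert_self _ _) u (mem_insert_of_mem (mem_erase.2 ⟨Ne.symm hw, hu⟩)) hvu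
    rw [hw] at hadj
    simp only [mem_product, mem_erase, mem_singleton, hw]
    refine ⟨⟨?_, hadj.ne, hpU.1⟩, trivial⟩
    rintro rfl
    exact huz hadj.symm
  calc #(G.exchangePairs v U) ≤ #(((U.erase u).erase z) ×ˢ {u}) := card_le_card hsub
    _ = #U - 2 := by
      rw [card_product, card_singleton, mul_one, card_erase_of_mem (mem_erase.2 ⟨hzu, hz⟩),
        card_erase_of_mem hu, Nat.sub_sub]

section Counting

variable [Fintype V] (t : ℕ)

def indepThrough : Finset (Finset V) := {s : Finset V | #s = t ∧ G.IsIndepFinset s ∧ v ∈ s}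

def depAvoiding : Finset (Finset V) :=
  {s ∈ powersetCard t (univ.erase v) | ¬ G.IsIndepFinset s}

lemma indepCount_eq_card_add_card :
    indepCount G t =
      #{s ∈ powersetCard t (univ.erase v) | G.IsIndepFinset s} + #(G.indepThrough v t) := by
  rw [indepCount, Nat.card_eq_fintype_card, Fintype.card_subtype,
    ← card_filter_add_card_filter_not (fun s => v ∉ s), filter_filter, filter_filter,
    indepThrough]
  congr 2 <;> ext s <;>
    simp only [mem_filter, mem_univ, true_and, mem_powersetCard, subset_erase, subset_univ,
      not_not] <;>
    tauto

lemma card_filter_isIndepFinset_add_card_depAvoiding :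
    #{s ∈ powersetCard t (univ.erase v) | G.IsIndepFinset s} + #(G.depAvoiding v t) =
      (Fintype.card V - 1).choose t := by
  rw [depAvoiding, card_filter_add_card_filter_not, card_powersetCard,
    card_erase_of_mem (mem_univ v), card_univ]

variable {G v t} in
lemma insert_erase_insert_erase_of_mem_indepThrough {S : Finset V} {x w : V}
    (hS : S ∈ G.indepThrough v t) (hxS : x ∈ S) (hxw : G.Adj x w) :
    insert v ((insert w (S.erase v)).erase w) = S := by
  rw [erase_insert fun h => (mem_filter.1 hS).2.2.1.notMem_of_adj hxS hxw (mem_of_mem_erase h),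
    insert_erase (mem_filter.1 hS).2.2.2]

variable {G v t} in
lemma insert_erase_mem_depAvoiding {S : Finset V} {x w : V} (hS : S ∈ G.indepThrough v t)
    (hxS : x ∈ S.erase v) (hxw : G.Adj x w) :
    insert w (S.erase v) ∈ G.depAvoiding v t ∧
      (x, w) ∈ G.exchangePairs v (insert w (S.erase v)) := by
  obtain ⟨hxv, hxS⟩ := mem_erase.1 hxS
  obtain ⟨hSt, hSi, hvS⟩ := (mem_filter.1 hS).2
  have hwS := hSi.notMem_of_adj hxS hxw
  have hwv : w ≠ v := fun h => hSi x hxS v hvS (h ▸ hxw)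
  have hxU : x ∈ insert w (S.erase v) := mem_insert_of_mem (mem_erase.2 ⟨hxv, hxS⟩)
  refine ⟨mem_filter.2 ⟨mem_powersetCard.2 ⟨?_, ?_⟩, ?_⟩, mem_filter.2 ⟨?_, hxw, ?_⟩⟩
  · exact insert_subset (mem_erase.2 ⟨hwv, mem_univ _⟩) (erase_subset_erase v (subset_univ S))
  · have := card_pos.2 ⟨v, hvS⟩
    rw [card_insert_of_notMem fun h => hwS (mem_of_mem_erase h), card_erase_of_mem hvS]
    omega
  · exact fun hU => hU x hxU w (mem_insert_self _ _) hxw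
  · exact mem_product.2 ⟨hxU, mem_insert_self _ _⟩
  · rwa [insert_erase_insert_erase_of_mem_indepThrough hS hxS hxw]

lemma card_indepThrough_mul_le_sum (hG : ∀ x, ∃ w, G.Adj x w) :
    #(G.indepThrough v t) * (t - 1) ≤ ∑ U ∈ G.depAvoiding v t, #(G.exchangePairs v U) := by
  choose nb hnb using hG
  have hcard :
      #((G.indepThrough v t).sigma fun S => S.erase v) = #(G.indepThrough v t) * (t - 1) := by
    rw [card_sigma, sum_const_nat]
    intro S hS
    obtain ⟨hSt, -, hvS⟩ := (mem_filter.1 hS).2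
    rw [card_erase_of_mem hvS, hSt]
  rw [← hcard, ← card_sigma]
  refine card_le_card_of_injOn (fun p => ⟨insert (nb p.2) (p.1.erase v), (p.2, nb p.2)⟩) ?_ ?_
  · rintro ⟨S, x⟩ hSx
    simp only [coe_sigma, Set.mem_sigma_iff, mem_coe] at hSx ⊢
    exact insert_erase_mem_depAvoiding hSx.1 hSx.2 (hnb x)
  · rintro ⟨S, x⟩ hSx ⟨S', x'⟩ hSx' heq
    simp only [coe_sigma, Set.mem_sigma_iff, mem_coe, mem_erase] at hSx hSx'
    simp only [Sigma.mk.injEq, heq_eq_eq, Prod.mk.injEq] at heq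
    obtain ⟨hU, rfl, -⟩ := heq
    rw [← insert_erase_insert_erase_of_mem_indepThrough hSx.1 hSx.2.2 (hnb x),
      ← insert_erase_insert_erase_of_mem_indepThrough hSx'.1 hSx'.2.2 (hnb x), hU]

variable {t} in
lemma exists_mem_depAvoiding_superset {s : Finset V} {a b : V} (hs : s ⊆ univ.erase v)
    (hst : #s ≤ t) (htV : t ≤ Fintype.card V - 1) (ha : a ∈ s) (hb : b ∈ s) (hab : G.Adj a b) :
    ∃ U ∈ G.depAvoiding v t, s ⊆ U := by
  obtain ⟨U, hsU, hU, hUt⟩ := exists_subsuperset_card_eq hs hst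
    (by rwa [card_erase_of_mem (mem_univ v), card_univ])
  exact ⟨U, mem_filter.2 ⟨mem_powersetCard.2 ⟨hU, hUt⟩,
    fun hi => hi a (hsU ha) b (hsU hb) hab⟩, hsU⟩

variable {G v t} in
lemma exists_card_exchangePairs_lt_of_not_adj {u y z : V} (hvu : G.Adj v u) (hyv : y ≠ v)
    (hzv : z ≠ v) (hzu : z ≠ u) (huz : ¬ G.Adj u z) (hedge : G.Adj u y ∨ G.Adj y z)
    (ht : 3 ≤ t) (htV : t ≤ Fintype.card V - 1) :
    ∃ U ∈ G.depAvoiding v t, #(G.exchangePairs v U) < t - 1 := by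
  have hs : {u, y, z} ⊆ univ.erase v := by
    simp [insert_subset_iff, hvu.ne', hyv, hzv]
  have hcard : #{u, y, z} ≤ t := card_le_three.trans ht
  obtain ⟨U, hU, hsU⟩ : ∃ U ∈ G.depAvoiding v t, {u, y, z} ⊆ U := by
    rcases hedge with huy | hyz
    · exact G.exists_mem_depAvoiding_superset v hs hcard htV (by simp) (by simp) huy
    · exact G.exists_mem_depAvoiding_superset v hs hcard htV (by simp) (by simp) hyz
  have hUt : #U = t := (mem_powersetCard.1 (mem_filter.1 hU).1).2
  have := card_exchangePairs_le_of_adj hvu (hsU (by simp)) (hsU (by simp)) hzu huz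
  exact ⟨U, hU, by omega⟩

variable {G v t} in
lemma exists_card_exchangePairs_lt (hG : ∀ x, ∃ w, G.Adj x w)
    (hvmax : ∀ u, G.degree u ≤ G.degree v) (hstar : G ≠ starGraph v) (ht : 3 ≤ t)
    (htV : t ≤ Fintype.card V - 1) :
    ∃ U ∈ G.depAvoiding v t, #(G.exchangePairs v U) < t - 1 := by
  obtain ⟨a, b, hab, hav, hbv⟩ : ∃ a b, G.Adj a b ∧ a ≠ v ∧ b ≠ v := by
    by_contra! h
    exact hstar (G.eq_starGraph_of_forall_adj hG fun a b hab =>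
      or_iff_not_imp_left.2 (h a b hab))
  by_cases hvuniv : G.IsUniversal v
  · obtain ⟨U, hU, hsU⟩ := G.exists_mem_depAvoiding_superset v (s := {a, b})
      (by simp [insert_subset_iff, hav, hbv]) (card_le_two.trans (by omega)) htV
      (by simp) (by simp) hab
    refine ⟨U, hU, ?_⟩
    rw [exchangePairs_eq_empty (hsU (by simp)) (hsU (by simp)) hab.ne
      (hvuniv hav.symm) (hvuniv hbv.symm), card_empty]
    omega
  obtain ⟨u, hvu⟩ := hG v
  by_cases hleaf : ∀ y, G.Adj u y → y = v
  · refine exists_card_exchangePairs_lt_of_not_adj hvu hbv hav (fun h => ?_)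
      (fun h => hav (hleaf a h)) (Or.inr hab.symm) ht htV
    exact hbv (hleaf b (h ▸ hab))
  · push Not at hleaf
    obtain ⟨y, huy, hyv⟩ := hleaf
    have hu : ¬ G.IsUniversal u := by
      rw [not_isUniversal_iff_degree_lt] at hvuniv ⊢
      exact (hvmax u).trans_lt hvuniv
    simp only [IsUniversal, not_forall, exists_prop] at hu
    obtain ⟨z, huz, hnadj⟩ := hu
    have hzv : z ≠ v := by
      rintro rfl
      exact hnadj hvu.symm
    exact exists_card_exchangePairs_lt_of_not_adj hvu hyv hzv (Ne.symm huz) hnadj (Or.inl huy)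
      ht htV

variable {G v t} in
lemma card_indepThrough_lt_card_depAvoiding (hG : ∀ x, ∃ w, G.Adj x w)
    (hvmax : ∀ u, G.degree u ≤ G.degree v) (hstar : G ≠ starGraph v) (ht : 3 ≤ t)
    (htV : t ≤ Fintype.card V - 1) : #(G.indepThrough v t) < #(G.depAvoiding v t) := by
  refine Nat.lt_of_mul_lt_mul_right (a := t - 1)
    ((G.card_indepThrough_mul_le_sum v t hG).trans_lt ?_)
  rw [← smul_eq_mul, ← sum_const]
  refine sum_lt_sum (fun U hU => ?_) (exists_card_exchangePairs_lt hG hvmax hstar ht htV)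
  have := G.card_exchangePairs_le v U
  rw [(mem_powersetCard.1 (mem_filter.1 hU).1).2] at this
  omega

end Counting

end Exchange

end SimpleGraph

theorem star_maximizes_fixed_size {V : Type*} [Fintype V] [DecidableEq V]
    (G : SimpleGraph V) [DecidableRel G.Adj] (n t : ℕ)
    (hcard : Fintype.card V = n) (ht : 3 ≤ t) (ht' : t ≤ n - 1)
    (hdeg : ∀ v : V, 1 ≤ G.degree v)
    (hne : ¬ Nonempty (G ≃g completeBipartiteGraph (Fin 1) (Fin (n - 1)))) :
    indepCount G t < (n - 1).choose t := by
  subst hcard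
  have hG : ∀ x, ∃ w, G.Adj x w := fun x => (G.degree_pos_iff_exists_adj x).1 (hdeg x)
  obtain ⟨v, -, hvmax⟩ := Finset.exists_max_image Finset.univ (fun v => G.degree v)
    (Finset.univ_nonempty_iff.2 (Fintype.card_pos_iff.1 (by omega : 0 < Fintype.card V)))
  have hstar : G ≠ SimpleGraph.starGraph v := by
    rintro rfl
    exact hne (SimpleGraph.nonempty_starGraph_iso_completeBipartiteGraph v)
  rw [G.indepCount_eq_card_add_card v, ← G.card_filter_isIndepFinset_add_card_depAvoiding v]
  exact Nat.add_lt_add_left (SimpleGraph.card_indepThrough_lt_card_depAvoiding hG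
    (fun u => hvmax u (Finset.mem_univ u)) hstar ht ht') _
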